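/- Let t > 0 and h > 0. For the symbol e^{2iλx + 8iλ³t}R(λ) with R analytic and bounded by 1 on ℂ⁺, the kernel H_{x,t}(s) = (1/2π) ∫_{Im λ = h} e^{2iλx + 8iλ³t + iλs} R(λ) dλ extends, for each fixed t > 0 and s ≥ 0, to an entire function of the complex variable x. -/

import Mathlib

open MeasureTheory Complex Filter Topology

noncomputable section

/-! On the line `λ = σ + ih` one has `|e^{8iλ³t}| = e^{8th³ - 24thσ²}`, so with `|R| ≤ 1` the
integrand is `e^{2i(σ + ih)x} g(σ)` with `g` of Gaussian decay. A Fourier–Laplace transform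
`x ↦ ∫ e^{(aσ + b)x} g(σ) dσ` of such a `g` is entire: on a ball `‖x‖ ≤ M` the `x`-derivative of
the integrand is dominated by `C e^{rM|σ|} |g(σ)|`, which is integrable for every `r`. -/

theorem integrable_exp_mul_abs_sub_mul_sq (r : ℝ) {c : ℝ} (hc : 0 < c) :
    Integrable fun σ : ℝ => Real.exp (r * |σ| - c * σ ^ 2) := by
  refine ((integrable_exp_neg_mul_sq (half_pos hc)).const_mul (Real.exp (r ^ 2 / (2 * c)))).mono'
    (by fun_prop) (Eventually.of_forall fun σ => ?_)
  have amgm : r * |σ| ≤ r ^ 2 / (2 * c) + c / 2 * σ ^ 2 := by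
    rw [div_add' _ _ _ (by positivity), le_div_iff₀ (by positivity), ← sq_abs σ]
    nlinarith [sq_nonneg (r - c * |σ|)]
  rw [Real.norm_of_nonneg (Real.exp_pos _).le, ← Real.exp_add, Real.exp_le_exp]
  linarith

theorem integrable_exp_mul_abs_mul_norm_of_le_gaussian {g : ℝ → ℂ} (hg : AEStronglyMeasurable g)
    {C c : ℝ} (hc : 0 < c) (hgC : ∀ σ, ‖g σ‖ ≤ C * Real.exp (-c * σ ^ 2)) (r : ℝ) :
    Integrable fun σ : ℝ => Real.exp (r * |σ|) * ‖g σ‖ := by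
  refine ((integrable_exp_mul_abs_sub_mul_sq r hc).const_mul C).mono'
    ((by fun_prop : Continuous fun σ : ℝ => Real.exp (r * |σ|)).aestronglyMeasurable.mul hg.norm)
    (Eventually.of_forall fun σ => ?_)
  calc ‖Real.exp (r * |σ|) * ‖g σ‖‖ = Real.exp (r * |σ|) * ‖g σ‖ := by
        rw [Real.norm_of_nonneg (by positivity)]
    _ ≤ Real.exp (r * |σ|) * (C * Real.exp (-c * σ ^ 2)) := by gcongr; exact hgC σ
    _ = C * Real.exp (r * |σ| - c * σ ^ 2) := by
        rw [sub_eq_add_neg, Real.exp_add]; ring_nf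

theorem norm_cexp_mul_le (w x : ℂ) : ‖cexp (w * x)‖ ≤ Real.exp (‖w‖ * ‖x‖) :=
  (norm_exp_le_exp_norm _).trans_eq (by rw [norm_mul])

theorem norm_mul_cexp_mul_le (w x : ℂ) : ‖w * cexp (w * x)‖ ≤ Real.exp (‖w‖ * (‖x‖ + 1)) := by
  rw [norm_mul, mul_add_one, Real.exp_add, mul_comm (Real.exp _)]
  gcongr
  · exact (le_add_of_nonneg_right zero_le_one).trans (Real.add_one_le_exp _)
  · exact norm_cexp_mul_le _ _

theorem exp_norm_mul_ofReal_add_mul_le (a b : ℂ) (σ : ℝ) {m M : ℝ} (hm : 0 ≤ m) (hmM : m ≤ M) :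
    Real.exp (‖a * σ + b‖ * m) ≤ Real.exp (‖b‖ * M) * Real.exp (‖a‖ * M * |σ|) := by
  rw [← Real.exp_add, Real.exp_le_exp]
  have : ‖a * σ + b‖ ≤ ‖a‖ * |σ| + ‖b‖ := by simpa using norm_add_le (a * σ) b
  calc ‖a * σ + b‖ * m ≤ (‖a‖ * |σ| + ‖b‖) * M := by gcongr
    _ = ‖b‖ * M + ‖a‖ * M * |σ| := by ring

theorem differentiable_integral_cexp_affine_mul {g : ℝ → ℂ} (hg_meas : AEStronglyMeasurable g)
    (hg : ∀ r : ℝ, Integrable fun σ : ℝ => Real.exp (r * |σ|) * ‖g σ‖) (a b : ℂ) :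
    Differentiable ℂ fun x : ℂ => ∫ σ : ℝ, cexp ((a * σ + b) * x) * g σ := by
  intro x₀
  set M := ‖x₀‖ + 2
  set bound : ℝ → ℝ := fun σ => Real.exp (‖b‖ * M) * Real.exp (‖a‖ * M * |σ|) * ‖g σ‖
  have bound_int : Integrable bound := by
    simpa only [bound, mul_assoc] using (hg (‖a‖ * M)).const_mul (Real.exp (‖b‖ * M))
  have norm_le_of_mem_ball : ∀ x ∈ Metric.ball x₀ 1, ‖x‖ + 1 ≤ M := fun x hx => by
    linarith [norm_sub_norm_le x x₀, mem_ball_iff_norm.1 hx]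
  have hF_meas : ∀ x : ℂ, AEStronglyMeasurable fun σ : ℝ => cexp ((a * σ + b) * x) * g σ :=
    fun x => (by fun_prop : Continuous fun σ : ℝ => cexp ((a * σ + b) * x))
      |>.aestronglyMeasurable.mul hg_meas
  have hF_int : Integrable fun σ : ℝ => cexp ((a * σ + b) * x₀) * g σ := by
    refine bound_int.mono' (hF_meas x₀) (Eventually.of_forall fun σ => ?_)
    rw [norm_mul]
    refine mul_le_mul_of_nonneg_right ?_ (norm_nonneg _)
    exact (norm_cexp_mul_le _ _).trans (exp_norm_mul_ofReal_add_mul_le a b σ (norm_nonneg _)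
      (by linarith))
  have hF'_le : ∀ x ∈ Metric.ball x₀ 1, ∀ σ : ℝ,
      ‖(a * σ + b) * cexp ((a * σ + b) * x) * g σ‖ ≤ bound σ := fun x hx σ => by
    rw [norm_mul]
    refine mul_le_mul_of_nonneg_right ?_ (norm_nonneg _)
    exact (norm_mul_cexp_mul_le _ _).trans (exp_norm_mul_ofReal_add_mul_le a b σ (by positivity)
      (norm_le_of_mem_ball x hx))
  have h_diff : ∀ σ : ℝ, ∀ x : ℂ, HasDerivAt (fun y => cexp ((a * σ + b) * y) * g σ)
      ((a * σ + b) * cexp ((a * σ + b) * x) * g σ) x := fun σ x => by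
    simpa [mul_comm] using (((hasDerivAt_id x).const_mul (a * σ + b)).cexp).mul_const (g σ)
  exact (hasDerivAt_integral_of_dominated_loc_of_deriv_le (Metric.ball_mem_nhds x₀ one_pos)
    (Eventually.of_forall hF_meas) hF_int
    ((by fun_prop : Continuous fun σ : ℝ => (a * σ + b) * cexp ((a * σ + b) * x₀))
      |>.aestronglyMeasurable.mul hg_meas)
    (Eventually.of_forall fun σ x hx => hF'_le x hx σ) bound_int
    (Eventually.of_forall fun σ x _ => h_diff σ x)).2.differentiableAt

theorem re_cubic_phase (σ h t s : ℝ) :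
    (8 * I * ((σ : ℂ) + h * I) ^ 3 * t + I * ((σ : ℂ) + h * I) * s).re =
      8 * t * h ^ 3 - h * s - 24 * t * h * σ ^ 2 := by
  simp only [pow_succ, pow_zero, one_mul, add_re, mul_re, re_ofNat, I_re, mul_zero, im_ofNat, I_im,
    mul_one, sub_self, ofReal_re, ofReal_im, add_zero, add_im, mul_im, zero_add, zero_mul, zero_sub,
    neg_mul, sub_zero]
  ring

theorem hankel_kernel_entire_in_x_general
    (t h : ℝ) (ht : 0 < t) (hh : 0 < h)
    (R : ℂ → ℂ)
    (hR : DifferentiableOn ℂ R {z : ℂ | 0 < z.im})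
    (hRb : ∀ z : ℂ, 0 < z.im → ‖R z‖ ≤ 1)
    (s : ℝ) :
    Differentiable ℂ (fun x : ℂ =>
      (2 * Real.pi : ℂ)⁻¹ * ∫ σ : ℝ,
        Complex.exp (2 * Complex.I * (σ + h * Complex.I) * x +
          8 * Complex.I * (σ + h * Complex.I) ^ 3 * t +
          Complex.I * (σ + h * Complex.I) * s) * R (σ + h * Complex.I)) := by
  have hline : ∀ σ : ℝ, 0 < ((σ : ℂ) + h * I).im := by simp [hh]
  set g : ℝ → ℂ := fun σ =>
    cexp (8 * I * (σ + h * I) ^ 3 * t + I * (σ + h * I) * s) * R (σ + h * I)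
  have hg_cont : Continuous g :=
    (by fun_prop : Continuous _).mul (hR.continuousOn.comp_continuous (by fun_prop) hline)
  have hg_le : ∀ σ : ℝ,
      ‖g σ‖ ≤ Real.exp (8 * t * h ^ 3 - h * s) * Real.exp (-(24 * t * h) * σ ^ 2) := by
    intro σ
    rw [norm_mul, Complex.norm_exp, re_cubic_phase, ← Real.exp_add]
    refine mul_le_of_le_one_right (Real.exp_pos _).le (hRb _ (hline σ)) |>.trans_eq ?_
    ring_nf
  have hg_decay := integrable_exp_mul_abs_mul_norm_of_le_gaussian hg_cont.aestronglyMeasurable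
    (by positivity) hg_le
  have h_integrand : ∀ (x : ℂ) (σ : ℝ),
      cexp (2 * I * (σ + h * I) * x + 8 * I * (σ + h * I) ^ 3 * t + I * (σ + h * I) * s) *
        R (σ + h * I) = cexp ((2 * I * σ + 2 * I * (h * I)) * x) * g σ := by
    intro x σ
    rw [← mul_assoc, ← Complex.exp_add]
    ring_nf
  simp_rw [h_integrand]
  exact (differentiable_integral_cexp_affine_mul hg_cont.aestronglyMeasurable hg_decay
    (2 * I) (2 * I * (h * I))).const_mul _

/-- for `t > 0`, `h > 0`, `R` analytic and bounded by 1 on `ℂ⁺`, and `s ≥ 0`,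
the kernel `H_{x,t}(s) = (1/2π)∫_{Im λ = h} e^{2iλx+8iλ³t+iλs} R(λ) dλ` extends to an
entire function of the complex variable `x` (given by the same contour-integral formula). -/
theorem hankel_kernel_entire_in_x
    (t h : ℝ) (ht : 0 < t) (hh : 0 < h)
    (R : ℂ → ℂ)
    (hR : DifferentiableOn ℂ R {z : ℂ | 0 < z.im})
    (hRb : ∀ z : ℂ, 0 < z.im → ‖R z‖ ≤ 1)
    (s : ℝ) (hs : 0 ≤ s) :
    Differentiable ℂ (fun x : ℂ =>
      (2 * Real.pi : ℂ)⁻¹ * ∫ σ : ℝ,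
        Complex.exp (2 * Complex.I * (σ + h * Complex.I) * x +
          8 * Complex.I * (σ + h * Complex.I) ^ 3 * t +
          Complex.I * (σ + h * Complex.I) * s) * R (σ + h * Complex.I)) :=
  hankel_kernel_entire_in_x_general t h ht hh R hR hRb s
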